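/- Let n ≥ 1 and let M ∈ Sp(2n) have the n×n block form M = [[A, B],[C, D]] with B and D invertible. Then for every ω ∈ ℂ, det(N M⁻¹ N M − ω I_{2n}) = det(ω² Iₙ − 2ω(Iₙ + 2CBᵀ) + Iₙ), where the real matrices are regarded as complex matrices. -/
import Mathlib


open Matrix

/-- The standard symplectic matrix `J = [[0, -Iₙ], [Iₙ, 0]]` in `n × n` block form. -/
def Jmat (n : ℕ) : Matrix (Fin n ⊕ Fin n) (Fin n ⊕ Fin n) ℝ :=
  Matrix.fromBlocks 0 (-1) 1 0

/-- The matrix `N = [[-Iₙ, 0], [0, Iₙ]]` in `n × n` block form. -/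
def Nmat (n : ℕ) : Matrix (Fin n ⊕ Fin n) (Fin n ⊕ Fin n) ℝ :=
  Matrix.fromBlocks (-1) 0 0 1

section Aux
variable {n : ℕ}
local notation "C1" => (1 : Matrix (Fin n) (Fin n) ℂ)
local notation "C0" => (0 : Matrix (Fin n) (Fin n) ℂ)

lemma det_swap_blocks :
    (Matrix.fromBlocks (0 : Matrix (Fin n) (Fin n) ℂ) (1 : Matrix (Fin n) (Fin n) ℂ) 1 0).det
      = (-1 : ℂ) ^ n := by
  have h1 : Matrix.fromBlocks C0 C1 (-C1) C0 =
      Matrix.fromBlocks C1 C1 C0 C1 * (Matrix.fromBlocks C1 C0 (-C1) C1 * Matrix.fromBlocks C1 C1 C0 C1) := by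
    simp [Matrix.fromBlocks_multiply]
  have h2 : Matrix.fromBlocks C0 C1 C1 C0 =
      Matrix.fromBlocks C0 C1 (-C1) C0 * Matrix.fromBlocks (-C1) C0 C0 C1 := by
    simp [Matrix.fromBlocks_multiply]
  rw [h2, det_mul, h1, det_mul, det_mul]
  simp [Matrix.det_fromBlocks_zero₂₁, Matrix.det_fromBlocks_zero₁₂, Matrix.det_neg]

lemma det_fromBlocks_offdiag (x y z w : Matrix (Fin n) (Fin n) ℂ) (hy : IsUnit y) :
    (Matrix.fromBlocks x y z w).det = (-1 : ℂ) ^ n * y.det * (z - w * y⁻¹ * x).det := by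
  have h : Matrix.fromBlocks x y z w =
      Matrix.fromBlocks y x w z * Matrix.fromBlocks C0 C1 C1 C0 := by
    simp [Matrix.fromBlocks_multiply]
  haveI := hy.invertible
  rw [h, det_mul, det_swap_blocks (n := n), Matrix.det_fromBlocks₁₁, Matrix.invOf_eq_nonsing_inv]
  ring
end Aux

theorem stmt_9 (n : ℕ) (hn : 1 ≤ n)
    (A B C D : Matrix (Fin n) (Fin n) ℝ)
    (M : Matrix (Fin n ⊕ Fin n) (Fin n ⊕ Fin n) ℝ)
    (hM : M = Matrix.fromBlocks A B C D)
    (hsp : Mᵀ * Jmat n * M = Jmat n)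
    (hB : IsUnit B) (hD : IsUnit D) (ω : ℂ) :
    ((Nmat n * M⁻¹ * Nmat n * M).map (Complex.ofReal ·) - ω • 1).det =
      (ω ^ 2 • (1 : Matrix (Fin n) (Fin n) ℂ)
        - (2 * ω) • ((1 : Matrix (Fin n) (Fin n) ℂ) + 2 • (C * Bᵀ).map (Complex.ofReal ·))
        + 1).det := by
  -- Part 1 : real block identities
  have hJ2 : Jmat n * Jmat n = -1 := by
    have h1 : (-1 : Matrix (Fin n ⊕ Fin n) (Fin n ⊕ Fin n) ℝ)
        = Matrix.fromBlocks (-1) 0 0 (-1) := by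
      rw [← Matrix.fromBlocks_one (l := Fin n) (m := Fin n) (α := ℝ), Matrix.fromBlocks_neg]
      simp
    rw [h1]
    simp [Jmat, Matrix.fromBlocks_multiply]
  set K : Matrix (Fin n ⊕ Fin n) (Fin n ⊕ Fin n) ℝ :=
    Matrix.fromBlocks Dᵀ (-Bᵀ) (-Cᵀ) Aᵀ with hK
  have hKJ : K = -(Jmat n) * Mᵀ * Jmat n := by
    rw [hM, hK]
    simp [Jmat, Matrix.fromBlocks_transpose, Matrix.fromBlocks_multiply, Matrix.fromBlocks_neg]
  have hKM : K * M = 1 := by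
    rw [hKJ]
    simp only [Matrix.mul_assoc]
    rw [← Matrix.mul_assoc Mᵀ (Jmat n) M, hsp, neg_mul, hJ2, neg_neg]
  have hMK : M * K = 1 := mul_eq_one_comm.mp hKM
  have hMinv : M⁻¹ = K := Matrix.inv_eq_left_inv hKM
  have h := hKM
  rw [hK, hM, ← Matrix.fromBlocks_one (l := Fin n) (m := Fin n) (α := ℝ)] at h
  simp only [Matrix.fromBlocks_multiply] at h
  obtain ⟨f1, f2, f3, f4⟩ := Matrix.fromBlocks_inj.mp h
  have h' := hMK
  rw [hK, hM, ← Matrix.fromBlocks_one (l := Fin n) (m := Fin n) (α := ℝ)] at h'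
  simp only [Matrix.fromBlocks_multiply] at h'
  obtain ⟨e1, e2, e3, e4⟩ := Matrix.fromBlocks_inj.mp h'
  have hP : Nmat n * M⁻¹ * Nmat n * M
      = Matrix.fromBlocks (Dᵀ*A + Bᵀ*C) (Dᵀ*B + Bᵀ*D) (Cᵀ*A + Aᵀ*C) (Cᵀ*B + Aᵀ*D) := by
    rw [hMinv, hK, hM]
    simp [Nmat, Matrix.fromBlocks_multiply]
  -- real relations in convenient form
  have rf1 : Dᵀ*A = 1 + Bᵀ*C := by rw [← f1, Matrix.neg_mul]; abel
  have rf2 : Dᵀ*B = Bᵀ*D := by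
    rw [Matrix.neg_mul] at f2; exact add_neg_eq_zero.mp f2
  have rf3 : Cᵀ*A = Aᵀ*C := by
    rw [Matrix.neg_mul] at f3; exact (neg_add_eq_zero.mp f3)
  have rf4 : Aᵀ*D = 1 + Cᵀ*B := by rw [← f4, Matrix.neg_mul]; abel
  have re3 : C*Dᵀ = D*Cᵀ := by
    rw [Matrix.mul_neg] at e3; exact add_neg_eq_zero.mp e3
  -- Part 2 : move to ℂ
  have hfun : ((Complex.ofReal ·) : ℝ → ℂ) = ⇑Complex.ofRealHom := rfl
  rw [hfun, hP]
  set φ : ℝ →+* ℂ := Complex.ofRealHom with hφ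
  set a : Matrix (Fin n) (Fin n) ℂ := A.map ⇑φ with ha
  set b : Matrix (Fin n) (Fin n) ℂ := B.map ⇑φ with hb'
  set c : Matrix (Fin n) (Fin n) ℂ := C.map ⇑φ with hc'
  set d : Matrix (Fin n) (Fin n) ℂ := D.map ⇑φ with hd'
  have Φeq : ∀ X : Matrix (Fin n) (Fin n) ℝ, φ.mapMatrix X = X.map ⇑φ := fun _ => rfl
  have cf1 : dᵀ * a = 1 + bᵀ * c := by
    have := congrArg φ.mapMatrix rf1
    simpa only [_root_.map_mul, _root_.map_add, _root_.map_one, RingHom.mapMatrix_apply, Matrix.transpose_map, ← ha, ← hb', ← hc', ← hd'] using this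
  have cf2 : dᵀ * b = bᵀ * d := by
    have := congrArg φ.mapMatrix rf2
    simpa only [_root_.map_mul, RingHom.mapMatrix_apply, Matrix.transpose_map, ← ha, ← hb', ← hc', ← hd'] using this
  have cf3 : cᵀ * a = aᵀ * c := by
    have := congrArg φ.mapMatrix rf3
    simpa only [_root_.map_mul, RingHom.mapMatrix_apply, Matrix.transpose_map, ← ha, ← hb', ← hc', ← hd'] using this
  have cf4 : aᵀ * d = 1 + cᵀ * b := by
    have := congrArg φ.mapMatrix rf4
    simpa only [_root_.map_mul, _root_.map_add, _root_.map_one, RingHom.mapMatrix_apply, Matrix.transpose_map, ← ha, ← hb', ← hc', ← hd'] using this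
  have ce3 : c * dᵀ = d * cᵀ := by
    have := congrArg φ.mapMatrix re3
    simpa only [_root_.map_mul, RingHom.mapMatrix_apply, Matrix.transpose_map, ← ha, ← hb', ← hc', ← hd'] using this
  -- invertibility over ℂ
  have hbd : IsUnit b.det := by
    rw [hb', show B.map ⇑φ = φ.mapMatrix B from rfl, ← RingHom.map_det]
    exact ((Matrix.isUnit_iff_isUnit_det B).mp hB).map φ
  have hdd : IsUnit d.det := by
    rw [hd', show D.map ⇑φ = φ.mapMatrix D from rfl, ← RingHom.map_det]
    exact ((Matrix.isUnit_iff_isUnit_det D).mp hD).map φ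
  have hbtd : IsUnit bᵀ.det := by rwa [Matrix.det_transpose]
  have hdtd : IsUnit dᵀ.det := by rwa [Matrix.det_transpose]
  have hbd0 : b.det ≠ 0 := hbd.ne_zero
  have hdtd0 : dᵀ.det ≠ 0 := hdtd.ne_zero
  -- cancellation helpers
  have cb1 : ∀ X : Matrix (Fin n) (Fin n) ℂ, b * (b⁻¹ * X) = X :=
    fun X => Matrix.mul_nonsing_inv_cancel_left b X hbd
  have cb2 : ∀ X : Matrix (Fin n) (Fin n) ℂ, b⁻¹ * (b * X) = X :=
    fun X => Matrix.nonsing_inv_mul_cancel_left b X hbd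
  -- key inverse relations
  have k2' : cᵀ * dᵀ⁻¹ = d⁻¹ * c := by
    have h1 := congrArg (fun X => d⁻¹ * X * dᵀ⁻¹) ce3
    rw [Matrix.nonsing_inv_mul_cancel_left d cᵀ hdd, ← Matrix.mul_assoc,
      Matrix.mul_assoc (d⁻¹ * c) dᵀ dᵀ⁻¹, Matrix.mul_nonsing_inv dᵀ hdtd, Matrix.mul_one] at h1
    exact h1.symm
  have k1' : dᵀ⁻¹ * bᵀ = b * d⁻¹ := by
    have h1 := congrArg (fun X => dᵀ⁻¹ * X * d⁻¹) cf2
    rw [Matrix.nonsing_inv_mul_cancel_left dᵀ b hdtd, ← Matrix.mul_assoc,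
      Matrix.mul_assoc (dᵀ⁻¹ * bᵀ) d d⁻¹, Matrix.mul_nonsing_inv d hdd, Matrix.mul_one] at h1
    exact h1.symm
  have k1r : ∀ X : Matrix (Fin n) (Fin n) ℂ, dᵀ⁻¹ * (bᵀ * X) = b * (d⁻¹ * X) := by
    intro X; rw [← Matrix.mul_assoc, k1', Matrix.mul_assoc]
  have haTc : aᵀ * c = d⁻¹ * c + cᵀ * (b * (d⁻¹ * c)) := by
    have h1 : aᵀ = (1 + cᵀ * b) * d⁻¹ := by
      rw [← cf4, Matrix.mul_assoc, Matrix.mul_nonsing_inv d hdd, Matrix.mul_one]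
    rw [h1]
    simp only [Matrix.add_mul, Matrix.one_mul, Matrix.mul_assoc]
  have p2 : d⁻¹ * (c * (bᵀ * c)) = cᵀ * (b * (d⁻¹ * c)) := by
    have h1 : (d⁻¹ * c) * (bᵀ * c) = (cᵀ * dᵀ⁻¹) * (bᵀ * c) := by rw [k2']
    rw [Matrix.mul_assoc, Matrix.mul_assoc, k1r] at h1
    exact h1
  -- the three binomial factors
  have hXf : dᵀ * a + bᵀ * c - ω • 1 = (1 - ω) • 1 + (2:ℂ) • (bᵀ * c) := by
    rw [cf1]; module
  have hWf : cᵀ * b + aᵀ * d - ω • 1 = (1 - ω) • 1 + (2:ℂ) • (cᵀ * b) := by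
    rw [cf4]; module
  have hZf : cᵀ * a + aᵀ * c = (2:ℂ) • (d⁻¹ * c) + (2:ℂ) • (cᵀ * (b * (d⁻¹ * c))) := by
    rw [cf3, haTc]; module
  -- Y is invertible with explicit inverse
  have hY2 : dᵀ * b + bᵀ * d = (2:ℂ) • (dᵀ * b) := by
    rw [cf2, two_smul]
  have hprod : (dᵀ * b + bᵀ * d) * ((2:ℂ)⁻¹ • (b⁻¹ * dᵀ⁻¹)) = 1 := by
    rw [hY2, smul_mul_assoc, mul_smul_comm, smul_smul]
    rw [Matrix.mul_assoc, cb1, Matrix.mul_nonsing_inv dᵀ hdtd]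
    norm_num
  have hyu : IsUnit (dᵀ * b + bᵀ * d) :=
    @isUnit_of_invertible _ _ _ (invertibleOfRightInverse _ _ hprod)
  have hYinv : (dᵀ * b + bᵀ * d)⁻¹ = (2:ℂ)⁻¹ • (b⁻¹ * dᵀ⁻¹) := Matrix.inv_eq_right_inv hprod
  -- Schur complement simplification
  have hT : cᵀ * a + aᵀ * c
      - (cᵀ * b + aᵀ * d - ω • 1) * (dᵀ * b + bᵀ * d)⁻¹ * (dᵀ * a + bᵀ * c - ω • 1)
      = (-(2:ℂ)⁻¹) • (b⁻¹ * (dᵀ⁻¹ * ((1 - ω) ^ 2 • (1 : Matrix (Fin n) (Fin n) ℂ)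
          - (4 * ω) • (bᵀ * c)))) := by
    rw [hYinv, hZf, hWf, hXf]
    simp only [Matrix.mul_add, Matrix.add_mul, Matrix.mul_sub, Matrix.sub_mul,
      smul_mul_assoc, mul_smul_comm, smul_smul, Matrix.mul_one, Matrix.one_mul,
      Matrix.mul_assoc, cb1, cb2, k1r, k2', p2]
    module
  -- block form of the mapped matrix
  have hm11 : (Dᵀ*A + Bᵀ*C).map ⇑φ = dᵀ*a + bᵀ*c := by
    rw [show (Dᵀ*A + Bᵀ*C).map ⇑φ = φ.mapMatrix (Dᵀ*A + Bᵀ*C) from rfl]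
    simp only [_root_.map_add, _root_.map_mul, RingHom.mapMatrix_apply,
      Matrix.transpose_map, ← ha, ← hb', ← hc', ← hd']
  have hm12 : (Dᵀ*B + Bᵀ*D).map ⇑φ = dᵀ*b + bᵀ*d := by
    rw [show (Dᵀ*B + Bᵀ*D).map ⇑φ = φ.mapMatrix (Dᵀ*B + Bᵀ*D) from rfl]
    simp only [_root_.map_add, _root_.map_mul, RingHom.mapMatrix_apply,
      Matrix.transpose_map, ← ha, ← hb', ← hc', ← hd']
  have hm21 : (Cᵀ*A + Aᵀ*C).map ⇑φ = cᵀ*a + aᵀ*c := by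
    rw [show (Cᵀ*A + Aᵀ*C).map ⇑φ = φ.mapMatrix (Cᵀ*A + Aᵀ*C) from rfl]
    simp only [_root_.map_add, _root_.map_mul, RingHom.mapMatrix_apply,
      Matrix.transpose_map, ← ha, ← hb', ← hc', ← hd']
  have hm22 : (Cᵀ*B + Aᵀ*D).map ⇑φ = cᵀ*b + aᵀ*d := by
    rw [show (Cᵀ*B + Aᵀ*D).map ⇑φ = φ.mapMatrix (Cᵀ*B + Aᵀ*D) from rfl]
    simp only [_root_.map_add, _root_.map_mul, RingHom.mapMatrix_apply,
      Matrix.transpose_map, ← ha, ← hb', ← hc', ← hd']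
  have hone : (1 : Matrix (Fin n ⊕ Fin n) (Fin n ⊕ Fin n) ℂ) = Matrix.fromBlocks 1 0 0 1 :=
    Matrix.fromBlocks_one.symm
  have hblocks : (Matrix.fromBlocks (Dᵀ*A + Bᵀ*C) (Dᵀ*B + Bᵀ*D) (Cᵀ*A + Aᵀ*C)
        (Cᵀ*B + Aᵀ*D)).map ⇑φ - ω • 1
      = Matrix.fromBlocks (dᵀ*a + bᵀ*c - ω•1) (dᵀ*b + bᵀ*d) (cᵀ*a + aᵀ*c)
        (cᵀ*b + aᵀ*d - ω•1) := by
    rw [Matrix.fromBlocks_map, hm11, hm12, hm21, hm22, hone, Matrix.fromBlocks_smul,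
      sub_eq_add_neg, Matrix.fromBlocks_neg, Matrix.fromBlocks_add]
    simp [sub_eq_add_neg]
  rw [hblocks, det_fromBlocks_offdiag _ _ _ _ hyu, hT]
  -- determinants
  have hYdet : (dᵀ*b + bᵀ*d).det = 2^n * (dᵀ.det * b.det) := by
    rw [hY2, Matrix.det_smul, det_mul, Fintype.card_fin]
  set G : Matrix (Fin n) (Fin n) ℂ :=
    (1-ω)^2 • (1 : Matrix (Fin n) (Fin n) ℂ) - (4*ω) • (bᵀ*c) with hG
  have hSdet : ((-(2:ℂ)⁻¹) • (b⁻¹ * (dᵀ⁻¹ * G))).det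
      = (-(2:ℂ)⁻¹)^n * (b.det⁻¹ * (dᵀ.det⁻¹ * G.det)) := by
    rw [Matrix.det_smul, det_mul, det_mul, Fintype.card_fin, Matrix.det_nonsing_inv,
      Matrix.det_nonsing_inv, Ring.inverse_eq_inv, Ring.inverse_eq_inv]
  have hbtu : IsUnit bᵀ := (Matrix.isUnit_iff_isUnit_det bᵀ).mpr hbtd
  have hconj : G = bᵀ * ((1-ω)^2 • (1 : Matrix (Fin n) (Fin n) ℂ) - (4*ω) • (c*bᵀ)) * bᵀ⁻¹ := by
    rw [hG, Matrix.mul_sub, Matrix.sub_mul]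
    simp only [mul_smul_comm, smul_mul_assoc, Matrix.mul_one, Matrix.one_mul,
      Matrix.mul_assoc, Matrix.mul_nonsing_inv bᵀ hbtd]
  have hGdet : G.det = ((1-ω)^2 • (1 : Matrix (Fin n) (Fin n) ℂ) - (4*ω) • (c*bᵀ)).det := by
    rw [hconj, Matrix.det_conj hbtu]
  have hcbmap : (C*Bᵀ).map ⇑φ = c*bᵀ := by
    rw [show (C*Bᵀ).map ⇑φ = φ.mapMatrix (C*Bᵀ) from rfl]
    simp only [_root_.map_mul, RingHom.mapMatrix_apply, Matrix.transpose_map, ← hb', ← hc']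
  have hRHS : ω^2 • (1 : Matrix (Fin n) (Fin n) ℂ)
        - (2*ω) • ((1 : Matrix (Fin n) (Fin n) ℂ) + 2 • ((C*Bᵀ).map ⇑φ)) + 1
      = (1-ω)^2 • (1 : Matrix (Fin n) (Fin n) ℂ) - (4*ω) • (c*bᵀ) := by
    rw [hcbmap]; module
  rw [hRHS, hYdet, hSdet, hGdet]
  have hpow : ((-1:ℂ))^n * 2^n * (-(2:ℂ)⁻¹)^n = 1 := by
    rw [← mul_pow, ← mul_pow]; norm_num
  set g := ((1-ω)^2 • (1 : Matrix (Fin n) (Fin n) ℂ) - (4*ω) • (c*bᵀ)).det with hg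
  calc (-1:ℂ)^n * (2^n * (dᵀ.det * b.det)) * ((-(2:ℂ)⁻¹)^n * (b.det⁻¹ * (dᵀ.det⁻¹ * g)))
      = ((-1:ℂ)^n * 2^n * (-(2:ℂ)⁻¹)^n) * ((dᵀ.det) * (dᵀ.det)⁻¹)
        * ((b.det) * (b.det)⁻¹) * g := by ring
    _ = g := by rw [hpow, mul_inv_cancel₀ hdtd0, mul_inv_cancel₀ hbd0]; ring
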